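/- Every finite group of order 24 having exactly five conjugacy classes is isomorphic to the symmetric group S₄ of all permutations of a four-element set. -/

import Mathlib

/-!
In a group of order 24 with five conjugacy classes, the class equation forces the center to be
trivial, and a normal subgroup `P` of order 3 is impossible: `G ⧸ P` has order 8, hence at least
five conjugacy classes, while passing to a proper quotient loses classes. So there are four
Sylow 3-subgroups, and `G` acts on them. The kernel of this action lies in a Sylow normalizer,
of order 6; an element of order 3 in it would lie in every Sylow 3-subgroup, and a kernel of
order 2 would be central. Hence the action is faithful, and `G` embeds in, so is isomorphic
to, the symmetric group on four letters.
-/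

open Subgroup ConjClasses

section ClassEquation

variable {G : Type*} [Group G]

theorem ConjClasses.card_carrier_eq_index_centralizer (g : G) :
    Nat.card (ConjClasses.mk g).carrier = (centralizer {g}).index := by
  rw [← ConjAct.orbit_eq_carrier_conjClasses, Nat.card_coe_set_eq, ← MulAction.index_stabilizer,
    centralizer_eq_comap_stabilizer]
  -- `ConjAct.toConjAct` is the identity up to definitional unfolding
  rfl

variable [Finite G]

theorem two_mul_card_carrier_le_index_center {g : G} (hg : g ∉ center G) :
    2 * Nat.card (ConjClasses.mk g).carrier ≤ (center G).index := by
  rw [card_carrier_eq_index_centralizer, ← relIndex_mul_index (center_le_centralizer {g})]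
  have hne_one : (center G).relIndex (centralizer {g}) ≠ 1 := fun h =>
    hg (relIndex_eq_one.mp h (mem_centralizer_singleton_iff.mpr rfl))
  have hne_zero : (center G).relIndex (centralizer {g}) ≠ 0 := left_ne_zero_of_mul <| by
    rw [relIndex_mul_index (center_le_centralizer {g})]
    exact index_ne_zero_of_finite
  exact Nat.mul_le_mul_right _ (by omega)

theorem card_noncenter_add_card_center :
    Nat.card (noncenter G) + Nat.card (center G) = Nat.card (ConjClasses G) := by
  rw [← SetLike.coe_sort_coe, Nat.card_congr ((mk_bijOn G).equiv _), Nat.card_coe_set_eq,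
    Nat.card_coe_set_eq, Set.ncard_add_ncard_compl]

theorem card_le_card_center_add_card_noncenter_mul :
    Nat.card G ≤ Nat.card (center G)
      + Nat.card (noncenter G) * (Nat.card G / (2 * Nat.card (center G))) := by
  have hclass (c : ConjClasses G) (hc : c ∈ noncenter G) :
      Nat.card c.carrier ≤ Nat.card G / (2 * Nat.card (center G)) := by
    obtain ⟨g, rfl⟩ := c.exists_rep
    have hg : g ∉ center G := fun h => (mk_bijOn G).mapsTo h hc
    rw [Nat.le_div_iff_mul_le (Nat.mul_pos two_pos Nat.card_pos), ← card_mul_index (center G)]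
    nlinarith [two_mul_card_carrier_le_index_center hg]
  calc Nat.card G = Nat.card (center G) + ∑ᶠ c ∈ noncenter G, Nat.card c.carrier :=
        (Group.nat_card_center_add_sum_card_noncenter_eq_card G).symm
    _ ≤ _ := by
      gcongr
      rw [finsum_mem_eq_finite_toFinset_sum _ (Set.toFinite _), Nat.card_coe_set_eq,
        Set.ncard_eq_toFinset_card _ (Set.toFinite _), ← smul_eq_mul]
      exact Finset.sum_le_card_nsmul _ _ _ fun c hc => hclass c (by simpa using hc)

end ClassEquation

theorem five_le_card_conjClasses_of_card_eq_eight {G : Type*} [Group G] (h8 : Nat.card G = 8) :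
    5 ≤ Nat.card (ConjClasses G) := by
  have : Finite G := Nat.finite_of_card_ne_zero (by omega)
  have : Nontrivial G := Finite.one_lt_card_iff_nontrivial.mp (by omega)
  have : Nontrivial (center G) := (IsPGroup.of_card (p := 2) (n := 3) h8).center_nontrivial
  have hz : 1 < Nat.card (center G) := Finite.one_lt_card
  have hdvd : Nat.card (center G) ∣ 8 := h8 ▸ card_subgroup_dvd_card _
  have hbound := h8 ▸ card_le_card_center_add_card_noncenter_mul (G := G)
  have hsum := card_noncenter_add_card_center (G := G)
  have hle : Nat.card (center G) ≤ 8 := Nat.le_of_dvd (by norm_num) hdvd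
  interval_cases Nat.card (center G) <;> omega

theorem card_conjClasses_quotient_lt {G : Type*} [Group G] [Finite G] {N : Subgroup G} [N.Normal]
    (hN : N ≠ ⊥) : Nat.card (ConjClasses (G ⧸ N)) < Nat.card (ConjClasses G) := by
  obtain ⟨⟨n, hn⟩, hn1⟩ := N.ne_bot_iff_exists_ne_one.mp hN
  have hsurj := ConjClasses.map_surjective (QuotientGroup.mk'_surjective N)
  have hninj : ¬ Function.Injective (ConjClasses.map (QuotientGroup.mk' N)) := fun hinj => by
    have h : ConjClasses.mk n = ConjClasses.mk 1 := hinj <|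
      show ConjClasses.mk (QuotientGroup.mk' N n) = ConjClasses.mk (QuotientGroup.mk' N 1) by
        rw [QuotientGroup.mk'_apply, (QuotientGroup.eq_one_iff n).mpr hn, map_one]
    exact hn1 (Subtype.ext (isConj_one_left.mp (mk_eq_mk_iff_isConj.mp h)))
  refine (Nat.card_le_card_of_surjective _ hsurj).lt_of_ne fun h => hninj ?_
  exact ((Nat.bijective_iff_surjective_and_card _).mpr ⟨hsurj, h.symm⟩).1

theorem Subgroup.Normal.le_center_of_card_eq_two {G : Type*} [Group G] {N : Subgroup G}
    (hN : N.Normal) (h2 : Nat.card N = 2) : N ≤ center G := by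
  obtain ⟨a, -, ha⟩ := (Nat.card_eq_two_iff' (1 : N)).mp h2
  intro n hn
  rw [mem_center_iff]
  intro g
  by_cases hn1 : n = 1
  · simp [hn1]
  have hconj : g * n * g⁻¹ = n := by
    have h1 := ha ⟨g * n * g⁻¹, hN.conj_mem n hn g⟩ (by simpa [Subtype.ext_iff] using hn1)
    have h2 := ha ⟨n, hn⟩ (by simpa [Subtype.ext_iff] using hn1)
    exact congrArg Subtype.val (h1.trans h2.symm)
  exact mul_inv_eq_iff_eq_mul.mp hconj

theorem Sylow.card_eq_of_card_eq_mul {G : Type*} [Group G] [Finite G] {p m : ℕ} [Fact p.Prime]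
    (hG : Nat.card G = p * m) (hm : ¬ p ∣ m) (P : Sylow p G) : Nat.card P = p := by
  have hm0 : m ≠ 0 := fun h => hm (h ▸ dvd_zero p)
  rw [P.card_eq_multiplicity, hG, Nat.factorization_mul (Fact.out : p.Prime).ne_zero hm0,
    Finsupp.add_apply, Nat.Prime.factorization_self Fact.out,
    Nat.factorization_eq_zero_of_not_dvd hm, pow_one]

theorem IsPGroup.le_sylow_of_le_ker_toPermHom {G : Type*} [Group G] {p : ℕ} {H : Subgroup G}
    (hH : IsPGroup p H) (hker : H ≤ (MulAction.toPermHom G (Sylow p G)).ker) (P : Sylow p G) :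
    H ≤ P :=
  hH.sylow_mem_fixedPoints_iff.mp fun h => DFunLike.congr_fun (hker h.2) P

section OrderTwentyFour

variable {G : Type*} [Group G] [Finite G]

theorem center_eq_bot_of_card_eq_24 (hcard : Nat.card G = 24)
    (hconj : Nat.card (ConjClasses G) = 5) : center G = ⊥ := by
  rw [← card_eq_one]
  have hdvd : Nat.card (center G) ∣ 24 := hcard ▸ card_subgroup_dvd_card _
  have hbound := hcard ▸ card_le_card_center_add_card_noncenter_mul (G := G)
  have hsum := hconj ▸ card_noncenter_add_card_center (G := G)
  have hpos : 0 < Nat.card (center G) := Nat.card_pos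
  have hle : Nat.card (center G) ≤ 5 := by omega
  interval_cases Nat.card (center G) <;> omega

theorem not_normal_of_card_eq_three (hcard : Nat.card G = 24)
    (hconj : Nat.card (ConjClasses G) = 5) (P : Subgroup G) (hP : Nat.card P = 3) :
    ¬ P.Normal := by
  intro hnormal
  have hquot : Nat.card (G ⧸ P) = 8 := by
    have := card_eq_card_quotient_mul_card_subgroup P
    rw [hcard, hP] at this
    omega
  have hne : P ≠ ⊥ := fun h => by simp [h] at hP
  have := card_conjClasses_quotient_lt hne
  have := five_le_card_conjClasses_of_card_eq_eight hquot
  omega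

theorem card_sylow_three_eq_four (hcard : Nat.card G = 24)
    (hconj : Nat.card (ConjClasses G) = 5) : Nat.card (Sylow 3 G) = 4 := by
  obtain ⟨P⟩ : Nonempty (Sylow 3 G) := inferInstance
  have hP : Nat.card P = 3 := P.card_eq_of_card_eq_mul (m := 8) hcard (by norm_num)
  have hindex : (P : Subgroup G).index = 8 := by
    have := card_mul_index (P : Subgroup G)
    rw [hP, hcard] at this
    omega
  have hdvd : Nat.card (Sylow 3 G) ∣ 8 := hindex ▸ P.card_dvd_index
  have hmod : Nat.card (Sylow 3 G) % 3 = 1 := card_sylow_modEq_one 3 G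
  have hne : Nat.card (Sylow 3 G) ≠ 1 := fun h1 => by
    have : Subsingleton (Sylow 3 G) := (Nat.card_eq_one_iff_unique.mp h1).1
    exact not_normal_of_card_eq_three hcard hconj P hP P.normal_of_subsingleton
  have hle : Nat.card (Sylow 3 G) ≤ 8 := Nat.le_of_dvd (by norm_num) hdvd
  interval_cases Nat.card (Sylow 3 G) <;> omega

theorem toPermHom_sylow_three_injective (hcard : Nat.card G = 24)
    (hconj : Nat.card (ConjClasses G) = 5) :
    Function.Injective (MulAction.toPermHom G (Sylow 3 G)) := by
  set K := (MulAction.toPermHom G (Sylow 3 G)).ker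
  have hsylow := card_sylow_three_eq_four hcard hconj
  obtain ⟨P⟩ : Nonempty (Sylow 3 G) := inferInstance
  have hK6 : Nat.card K ∣ 6 := by
    have hN := card_mul_index (normalizer (P : Set G))
    rw [← P.card_eq_index_normalizer, hsylow, hcard] at hN
    have hKN : K ≤ normalizer (P : Set G) := fun g hg =>
      Sylow.smul_eq_iff_mem_normalizer.mp (DFunLike.congr_fun hg P)
    exact (show Nat.card (normalizer (P : Set G)) = 6 by omega) ▸ card_dvd_of_le hKN
  have hK3 : ¬ 3 ∣ Nat.card K := fun h3 => by
    obtain ⟨x, hx⟩ := exists_prime_orderOf_dvd_card' 3 h3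
    have hH : Nat.card (zpowers (x : G)) = 3 := by rw [Nat.card_zpowers, orderOf_coe, hx]
    have hHK : zpowers (x : G) ≤ K := zpowers_le.mpr x.2
    have heq (Q : Sylow 3 G) : (Q : Subgroup G) = zpowers (x : G) :=
      (eq_of_le_of_card_ge ((IsPGroup.of_card (n := 1) hH).le_sylow_of_le_ker_toPermHom hHK Q)
        (by rw [hH, Q.card_eq_of_card_eq_mul (m := 8) hcard (by norm_num)])).symm
    have : Subsingleton (Sylow 3 G) := ⟨fun Q R => Sylow.ext ((heq Q).trans (heq R).symm)⟩
    simp [Nat.card_unique] at hsylow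
  have hK2 : Nat.card K ≠ 2 := fun h2 => by
    have hKZ : K ≤ center G := (MonoidHom.normal_ker _).le_center_of_card_eq_two h2
    rw [center_eq_bot_of_card_eq_24 hcard hconj, le_bot_iff, ← card_eq_one] at hKZ
    omega
  rw [← MonoidHom.ker_eq_bot_iff, ← card_eq_one]
  have hpos : 0 < Nat.card K := Nat.card_pos
  have hle : Nat.card K ≤ 6 := Nat.le_of_dvd (by norm_num) hK6
  interval_cases Nat.card K <;> omega

end OrderTwentyFour

/-- Every finite group of order 24 having exactly five conjugacy classes is isomorphic
to the symmetric group `S₄` of all permutations of a four-element set. -/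
theorem group_card_24_five_conjClasses_iso_symmGroup4
    (G : Type*) [Group G] [Finite G]
    (hcard : Nat.card G = 24)
    (hconj : Nat.card (ConjClasses G) = 5) :
    Nonempty (G ≃* Equiv.Perm (Fin 4)) := by
  have hsylow := card_sylow_three_eq_four hcard hconj
  have hcard_perm : Nat.card G = Nat.card (Equiv.Perm (Sylow 3 G)) := by
    rw [Nat.card_perm, hsylow, hcard]
    rfl
  have hbij := (Nat.bijective_iff_injective_and_card _).mpr
    ⟨toPermHom_sylow_three_injective hcard hconj, hcard_perm⟩
  exact ⟨(MulEquiv.ofBijective _ hbij).trans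
    ((Finite.equivFin (Sylow 3 G)).trans (finCongr hsylow)).permCongrHom⟩
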